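/- The A^e-linear map Δ: 𝔸 → 𝔸⊗_A𝔸 defined by Δ₀(ξ₀) = ξ₀⊗_Aξ₀, Δ₁(ξ₁) = ξ₁⊗_Aξ₀ + ξ₀⊗_Aξ₁, Δ_{2n}(ξ_{2n}) = Σ_{i=0}^{n} ξ_{2i}⊗_Aξ_{2n−2i} + Σ_{i=0}^{n−1} Σ_{a+b+c=p−2} x^a ξ_{2i+1} ⊗_A x^b ξ_{2n−2i−1} x^c for n ≥ 1, and Δ_{2n+1}(ξ_{2n+1}) = Σ_{i=0}^{2n+1} ξ_i ⊗_A ξ_{2n+1−i} for n ≥ 1, is a chain map lifting the canonical isomorphism A → A⊗_A A; that is, d_{𝔸⊗_A𝔸} ∘ Δ_n = Δ_{n−1} ∘ d_n for all n ≥ 1, and (π⊗_Aπ)∘Δ₀ equals the canonical isomorphism A ≅ A⊗_A A composed with π. -/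

import Mathlib

/-!
Setting: `k` a field of characteristic 0, `p > 2` an integer, `A = k[x]/(x^p)`,
`A^e = A ⊗ₖ A` (as `A` is commutative `A^op = A`), `u = x⊗1 - 1⊗x`,
`v = Σ_{i=0}^{p-1} x^i ⊗ x^{p-1-i}`, and `π : A^e → A` the multiplication map.
The complex `𝔸` has `𝔸ₙ = A^e` for `n ≥ 0`, with differential given by multiplication
by `u` in odd degrees and by `v` in even degrees, and augmentation `π`.
We write `ξₙ = 1 ⊗ 1` for the generator of `𝔸ₙ`, so that `x^i ξₙ x^j = x^i ⊗ x^j`.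
-/

open TensorProduct Polynomial

noncomputable section

variable (k : Type) [Field k] [CharZero k] (p : ℕ)

/-- `A = k[x]/(x^p)`. -/
abbrev Aq : Type := AdjoinRoot (X ^ p : k[X])

/-- `A^e = A ⊗ₖ A`. -/
abbrev Ae : Type := Aq k p ⊗[k] Aq k p

/-- The class of `x` in `A = k[x]/(x^p)`. -/
def xq : Aq k p := AdjoinRoot.root _

/-- `u = x ⊗ 1 - 1 ⊗ x ∈ A^e`. -/
def uE : Ae k p := xq k p ⊗ₜ 1 - 1 ⊗ₜ xq k p

/-- `v = Σ_{i=0}^{p-1} x^i ⊗ x^{p-1-i} ∈ A^e`. -/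
def vE : Ae k p := ∑ i ∈ Finset.range p, (xq k p ^ i) ⊗ₜ (xq k p ^ (p - 1 - i))

/-- The differential `dₙ : 𝔸ₙ → 𝔸ₙ₋₁` of the complex `𝔸`: multiplication by `u`
for `n` odd and by `v` for `n` even (`n ≥ 1`). -/
def dAn (n : ℕ) : Ae k p →ₗ[k] Ae k p :=
  LinearMap.mulLeft k (if n % 2 = 1 then uE k p else vE k p)

/-- The multiplication (augmentation) map `π : A^e → A`. -/
def piA : Ae k p →ₗ[k] Aq k p := LinearMap.mul' k (Aq k p)

/-!
The tensor square complex `𝔸 ⊗_A 𝔸`:  since `𝔸ᵢ ⊗_A 𝔸ⱼ ≅ A ⊗ₖ A ⊗ₖ A` (via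
`(a ⊗ b) ⊗_A (c ⊗ e) ↦ a ⊗ (b*c) ⊗ e`), we model the degree-`n` term
`(𝔸 ⊗_A 𝔸)ₙ = ⊕_{i+j=n} 𝔸ᵢ ⊗_A 𝔸ⱼ` as `Fin (n+1) → (A ⊗ₖ A) ⊗ₖ A`, the
component `i` corresponding to the summand `𝔸ᵢ ⊗_A 𝔸_{n-i}`.  Under this model
the left and right differentials become multiplication by the elements
`uL, vL, uR, vR` below, and the total differential `d(a ⊗_A b) = da ⊗_A b +
(-1)^{|a|} a ⊗_A db` is `dTot`.  The chain map `F = μ ⊗_A id - id ⊗_A μ`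
(where `μ` is `π` in degree 0 and `0` in positive degrees) becomes `FF`.
-/

/-- Model for `𝔸ᵢ ⊗_A 𝔸ⱼ`:  `(a⊗b) ⊗_A (c⊗e) ↦ (a ⊗ b*c) ⊗ e`. -/
abbrev TT : Type := Ae k p ⊗[k] Aq k p

/-- `u` acting through the left tensor factor: `x⊗1⊗1 - 1⊗x⊗1`. -/
def uL : TT k p := (uE k p) ⊗ₜ 1
/-- `v` acting through the left tensor factor. -/
def vL : TT k p := (vE k p) ⊗ₜ 1
/-- `u` acting through the right tensor factor: `1⊗x⊗1 - 1⊗1⊗x`. -/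
def uR : TT k p := ((1 : Aq k p) ⊗ₜ xq k p) ⊗ₜ 1 - ((1 : Aq k p) ⊗ₜ (1 : Aq k p)) ⊗ₜ xq k p
/-- `v` acting through the right tensor factor. -/
def vR : TT k p :=
  ∑ i ∈ Finset.range p, ((1 : Aq k p) ⊗ₜ (xq k p ^ i)) ⊗ₜ (xq k p ^ (p - 1 - i))

/-- Differential on the left tensor factor in degree `m`. -/
def eL (m : ℕ) : TT k p := if m % 2 = 1 then uL k p else vL k p
/-- Differential on the right tensor factor in degree `m`. -/
def eR (m : ℕ) : TT k p := if m % 2 = 1 then uR k p else vR k p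

/-- The total differential of the complex `𝔸 ⊗_A 𝔸`. -/
def dTot (n : ℕ) : (Fin (n + 1) → TT k p) →ₗ[k] (Fin n → TT k p) :=
  LinearMap.pi fun i => LinearMap.mulLeft k (eL k p (i + 1)) ∘ₗ LinearMap.proj i.succ
    + ((-1 : k) ^ (i : ℕ)) • (LinearMap.mulLeft k (eR k p (n - i)) ∘ₗ LinearMap.proj i.castSucc)

/-- `μ ⊗_A id` on the component `𝔸₀ ⊗_A 𝔸ₙ`:  `a ⊗ m ⊗ e ↦ (a*m) ⊗ e`. -/
def Lmap : TT k p →ₗ[k] Ae k p := (LinearMap.mul' k (Aq k p)).rTensor (Aq k p)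

/-- `id ⊗_A μ` on the component `𝔸ₙ ⊗_A 𝔸₀`:  `a ⊗ m ⊗ e ↦ a ⊗ (m*e)`. -/
def Rmap : TT k p →ₗ[k] Ae k p :=
  (LinearMap.mul' k (Aq k p)).lTensor (Aq k p) ∘ₗ
    (TensorProduct.assoc k (Aq k p) (Aq k p) (Aq k p)).toLinearMap

/-- The chain map `F = μ ⊗_A id - id ⊗_A μ : (𝔸 ⊗_A 𝔸)ₙ → 𝔸ₙ`. -/
def FF (n : ℕ) : (Fin (n + 1) → TT k p) →ₗ[k] Ae k p :=
  Lmap k p ∘ₗ LinearMap.proj 0 - Rmap k p ∘ₗ LinearMap.proj (Fin.last n)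

/-- The element `Σ_{a+b+c=p-2} x^a ξ ⊗_A x^b ξ x^c` appearing in the diagonal map. -/
def wElt : TT k p :=
  ∑ a ∈ Finset.range (p - 1), ∑ b ∈ Finset.range (p - 1 - a),
    ((xq k p ^ a) ⊗ₜ (xq k p ^ b)) ⊗ₜ (xq k p ^ (p - 2 - a - b))

/-- Component `i` of `Δₙ(ξₙ)`: it is `ξᵢ ⊗_A ξ_{n-i} = 1⊗1⊗1` except when `n` is even
and `i` is odd, where it is `Σ_{a+b+c=p-2} x^a ξᵢ ⊗_A x^b ξ_{n-i} x^c`. -/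
def dElt (n i : ℕ) : TT k p := if n % 2 = 0 ∧ i % 2 = 1 then wElt k p else 1

/-- `π ⊗_A π : 𝔸₀ ⊗_A 𝔸₀ → A ⊗_A A ≅ A`: multiply all three tensor factors. -/
def mulAll : (Fin 1 → TT k p) →ₗ[k] Aq k p :=
  LinearMap.mul' k (Aq k p) ∘ₗ Lmap k p ∘ₗ LinearMap.proj 0

/-!
Identify `𝔸ᵢ ⊗_A 𝔸ⱼ` with `A ⊗ A ⊗ A`, generated by the three copies `x₁, x₂, x₃` of `x`, on which
`A^e` acts through `x₁` and `x₃`. The left differentials are multiplication by `x₁ - x₂` and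
`h(x₁, x₂)`, the right ones by `x₂ - x₃` and `h(x₂, x₃)`, and `u, v` act as `x₁ - x₃, h(x₁, x₃)`,
where `h(x, y) = ∑_{i+j=p-1} xⁱ yʲ`. Since `Δ` is `A^e`-linear, it is a chain map as soon as
`d Δ(ξₙ₊₁) = Δ(d ξₙ₊₁)` holds componentwise, and according to the parities of the bidegree this is
one of `(x₁ - x₂) + (x₂ - x₃) = x₁ - x₃` or the three identities `(y - z) w = h(x, y) - h(x, z)`,
`(x - y) w = h(x, z) - h(y, z)`, `(x - z) w = h(x, y) - h(y, z)` for the complete homogeneous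
sum `w = ∑_{a+b+c=p-2} xᵃ yᵇ zᶜ`. The `y - z` identity telescopes, row by row in `a`, from
`(y - z) ∑_{b+c=m} yᵇ zᶜ = y^{m+1} - z^{m+1}`; the `x - y` one follows from it by the symmetry
`x ↔ z` of `w`, and the `x - z` one is their sum.
-/

open Finset

section GeomSum₃
variable {R : Type*} [CommRing R]

/-- The complete homogeneous sum of degree `m - 2` in three variables (zero for `m < 2`),
indexed to match the degree-`m - 1` sums `∑ i ∈ range m, x ^ i * y ^ (m - 1 - i)`. -/
def geomSum₃ (m : ℕ) (x y z : R) : R :=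
  ∑ a ∈ range (m - 1), ∑ b ∈ range (m - 1 - a), x ^ a * y ^ b * z ^ (m - 2 - a - b)

theorem geomSum₃_comm (m : ℕ) (x y z : R) : geomSum₃ m x y z = geomSum₃ m z y x := by
  unfold geomSum₃
  rw [sum_sigma', sum_sigma']
  refine sum_nbij' (fun ab => ⟨m - 2 - ab.1 - ab.2, ab.2⟩) (fun cb => ⟨m - 2 - cb.1 - cb.2, cb.2⟩)
    ?_ ?_ ?_ ?_ ?_ <;> simp only [mem_sigma, mem_range, Sigma.forall]
  · rintro a b ⟨ha, hb⟩; constructor <;> omega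
  · rintro a b ⟨ha, hb⟩; constructor <;> omega
  · rintro a b ⟨ha, hb⟩; simp only [Sigma.mk.inj_iff, heq_eq_eq, and_true]; omega
  · rintro a b ⟨ha, hb⟩; simp only [Sigma.mk.inj_iff, heq_eq_eq, and_true]; omega
  · intro a b h
    rw [show m - 2 - (m - 2 - a - b) - b = a by omega]
    ring

theorem mul_geomSum₃_yz (m : ℕ) (x y z : R) :
    (y - z) * geomSum₃ m x y z =
      ∑ i ∈ range m, x ^ i * y ^ (m - 1 - i) - ∑ i ∈ range m, x ^ i * z ^ (m - 1 - i) := by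
  cases m with
  | zero => simp [geomSum₃]
  | succ n =>
    have row : ∀ a ∈ range n,
        (y - z) * ∑ b ∈ range (n - a), x ^ a * y ^ b * z ^ (n + 1 - 2 - a - b)
          = x ^ a * y ^ (n - a) - x ^ a * z ^ (n - a) := by
      intro a _
      rw [← mul_sub, ← Commute.mul_geom_sum₂ (Commute.all y z), mul_sum, mul_sum, mul_sum]
      refine sum_congr rfl fun b _ => ?_
      rw [show n + 1 - 2 - a - b = n - a - 1 - b by omega]
      ring
    rw [geomSum₃, Nat.add_sub_cancel, mul_sum, sum_congr rfl row, sum_sub_distrib,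
      sum_range_succ, sum_range_succ]
    simp only [Nat.sub_self, pow_zero]
    ring

theorem mul_geomSum₃_xy (m : ℕ) (x y z : R) :
    (x - y) * geomSum₃ m x y z =
      ∑ i ∈ range m, x ^ i * z ^ (m - 1 - i) - ∑ i ∈ range m, y ^ i * z ^ (m - 1 - i) := by
  rw [geomSum₃_comm, ← neg_sub, neg_mul, mul_geomSum₃_yz, geom_sum₂_comm z x, geom_sum₂_comm z y,
    neg_sub]

theorem mul_geomSum₃_xz (m : ℕ) (x y z : R) :
    (x - z) * geomSum₃ m x y z =
      ∑ i ∈ range m, x ^ i * y ^ (m - 1 - i) - ∑ i ∈ range m, y ^ i * z ^ (m - 1 - i) := by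
  rw [← sub_add_sub_cancel x y z, add_mul, mul_geomSum₃_xy, mul_geomSum₃_yz]
  ring

end GeomSum₃

theorem AdjoinRoot.tensorProduct_ext {R : Type*} [CommRing R] {g : R[X]} (hg : g.Monic)
    {M : Type*} [AddCommMonoid M] [Module R M]
    {f₁ f₂ : AdjoinRoot g ⊗[R] AdjoinRoot g →ₗ[R] M}
    (h : ∀ a < g.natDegree, ∀ b < g.natDegree,
      f₁ ((root g ^ a) ⊗ₜ (root g ^ b)) = f₂ ((root g ^ a) ⊗ₜ (root g ^ b))) :
    f₁ = f₂ :=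
  ((powerBasis' hg).basis.tensorProduct (powerBasis' hg).basis).ext fun ⟨a, b⟩ => by
    simpa [Module.Basis.tensorProduct_apply, PowerBasis.basis_eq_pow] using h a a.isLt b b.isLt

section TripleTensor
variable {K : Type} [Field K] {p}

def x₁ : TT K p := (xq K p ⊗ₜ 1) ⊗ₜ 1
def x₂ : TT K p := (1 ⊗ₜ xq K p) ⊗ₜ 1
def x₃ : TT K p := (1 ⊗ₜ 1) ⊗ₜ xq K p

theorem pow_tmul_pow_tmul_pow (a b c : ℕ) :
    (((xq K p ^ a) ⊗ₜ (xq K p ^ b)) ⊗ₜ (xq K p ^ c) : TT K p) = x₁ ^ a * x₂ ^ b * x₃ ^ c := by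
  simp [x₁, x₂, x₃, Algebra.TensorProduct.tmul_pow, Algebra.TensorProduct.tmul_mul_tmul]

theorem uL_eq : uL K p = x₁ - x₂ := by
  simp only [uL, uE, x₁, x₂, TensorProduct.sub_tmul]

theorem uR_eq : uR K p = x₂ - x₃ := rfl

theorem vL_eq : vL K p = ∑ i ∈ range p, x₁ ^ i * x₂ ^ (p - 1 - i) := by
  simp only [vL, vE, TensorProduct.sum_tmul]
  refine sum_congr rfl fun i _ => ?_
  simpa using pow_tmul_pow_tmul_pow i (p - 1 - i) 0

theorem vR_eq : vR K p = ∑ i ∈ range p, x₂ ^ i * x₃ ^ (p - 1 - i) := by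
  refine sum_congr rfl fun i _ => ?_
  simpa using pow_tmul_pow_tmul_pow 0 i (p - 1 - i)

theorem wElt_eq : wElt K p = geomSum₃ p (x₁ : TT K p) x₂ x₃ :=
  sum_congr rfl fun _ _ => sum_congr rfl fun _ _ => pow_tmul_pow_tmul_pow _ _ _

/-- The `A^e`-module structure of `𝔸ᵢ ⊗_A 𝔸ⱼ`, which acts on the outer tensor factors. -/
def outerIncl : Ae K p →ₐ[K] TT K p :=
  Algebra.TensorProduct.map Algebra.TensorProduct.includeLeft (AlgHom.id K (Aq K p))

theorem outerIncl_tmul (a b : Aq K p) : outerIncl (a ⊗ₜ b) = (a ⊗ₜ 1) ⊗ₜ b := by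
  simp [outerIncl]

theorem outerIncl_uE : outerIncl (uE K p) = x₁ - x₃ := by
  simp [uE, outerIncl_tmul, x₁, x₃]

theorem outerIncl_vE : outerIncl (vE K p) = ∑ i ∈ range p, x₁ ^ i * x₃ ^ (p - 1 - i) := by
  simp only [vE, map_sum, outerIncl_tmul]
  refine sum_congr rfl fun i _ => ?_
  simpa using pow_tmul_pow_tmul_pow i 0 (p - 1 - i)

/-- The `𝔸ᵢ ⊗_A 𝔸ⱼ` component of `d Δ(ξᵢ₊ⱼ₊₁) = Δ(d ξᵢ₊ⱼ₊₁)`. -/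
theorem dElt_chain_relation (i j : ℕ) :
    eL K p (i + 1) * dElt K p (i + j + 1) (i + 1)
        + (-1 : K) ^ i • (eR K p (j + 1) * dElt K p (i + j + 1) i) =
      outerIncl (if (i + j + 1) % 2 = 1 then uE K p else vE K p) * dElt K p (i + j) i := by
  -- restated so that `rw` sees the instances of `TT K p` syntactically
  have neg_one_smul' (y : TT K p) : (-1 : K) • y = -y := neg_one_smul K y
  by_cases hi : Even i <;> by_cases hj : Even j <;>
    simp only [eL, eR, dElt, ← Nat.odd_iff, ← Nat.even_iff, ← Nat.not_even_iff_odd,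
      Nat.even_add_one, Nat.even_add, Even.add_one, Odd.add_one, hi, hj, ↓reduceIte,
      not_true_eq_false, not_false_eq_true, iff_true, iff_false, and_true, and_false, and_self,
      mul_one]
  · rw [hi.neg_one_pow, one_smul, uL_eq, uR_eq, outerIncl_uE]
    ring
  · rw [hi.neg_one_pow, one_smul, uL_eq, vR_eq, wElt_eq, outerIncl_vE]
    linear_combination mul_geomSum₃_xy p (x₁ : TT K p) x₂ x₃
  · rw [(Nat.not_even_iff_odd.mp hi).neg_one_pow, neg_one_smul', vL_eq, uR_eq, wElt_eq,
      outerIncl_vE]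
    linear_combination -mul_geomSum₃_yz p (x₁ : TT K p) x₂ x₃
  · rw [(Nat.not_even_iff_odd.mp hi).neg_one_pow, neg_one_smul', vL_eq, vR_eq, wElt_eq,
      outerIncl_uE]
    linear_combination -mul_geomSum₃_xz p (x₁ : TT K p) x₂ x₃

theorem apply_eq_outerIncl_mul_dElt {n : ℕ} (Dₙ : Ae K p →ₗ[K] (Fin (n + 1) → TT K p))
    (h : ∀ a < p, ∀ b < p, Dₙ ((xq K p ^ a) ⊗ₜ (xq K p ^ b)) =
      fun i : Fin (n + 1) => (((xq K p ^ a) ⊗ₜ 1) ⊗ₜ (xq K p ^ b) : TT K p) * dElt K p n i)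
    (z : Ae K p) (i : Fin (n + 1)) :
    Dₙ z i = outerIncl z * dElt K p n i := by
  suffices Dₙ = LinearMap.pi fun i : Fin (n + 1) =>
      LinearMap.mulRight K (dElt K p n i) ∘ₗ outerIncl.toLinearMap by
    rw [this]; rfl
  refine AdjoinRoot.tensorProduct_ext (monic_X_pow p) fun a ha b hb => ?_
  rw [natDegree_X_pow] at ha hb
  ext i
  simpa [xq, outerIncl_tmul] using congrFun (h a ha b hb) i

end TripleTensor

/-- `Δ` is recorded by its values `Δₙ(x^a ξₙ x^b) = (x^a ⊗ 1 ⊗ x^b) · Δₙ(ξₙ)`, which encode both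
the defining formulas (via `dElt`) and `A^e`-linearity. -/
theorem diagonal_is_chain_map
    (D : (n : ℕ) → Ae k p →ₗ[k] (Fin (n + 1) → TT k p))
    (HD : ∀ n, ∀ a < p, ∀ b < p,
      D n ((xq k p ^ a) ⊗ₜ (xq k p ^ b)) =
        fun i : Fin (n + 1) =>
          ((((xq k p ^ a) ⊗ₜ (1 : Aq k p)) ⊗ₜ (xq k p ^ b)) : TT k p) * dElt k p n (i : ℕ)) :
    (∀ n : ℕ, dTot k p (n + 1) ∘ₗ D (n + 1) = D n ∘ₗ dAn k p (n + 1)) ∧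
    mulAll k p ∘ₗ D 0 = piA k p := by
  have hD n := apply_eq_outerIncl_mul_dElt (D n) (HD n)
  refine ⟨fun n => LinearMap.ext fun z => funext fun i => ?_, TensorProduct.ext' fun a b => ?_⟩
  · have h := dElt_chain_relation (K := k) (p := p) i (n - i)
    rw [show i + (n - i) = n by omega, show n - i + 1 = n + 1 - i by omega] at h
    simp only [dTot, dAn, LinearMap.comp_apply, LinearMap.pi_apply, LinearMap.add_apply,
      LinearMap.smul_apply, LinearMap.mulLeft_apply, LinearMap.proj_apply, hD, Fin.val_succ,
      Fin.val_castSucc, map_mul]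
    rw [mul_left_comm _ (outerIncl z), mul_left_comm _ (outerIncl z), ← mul_smul_comm, ← mul_add, h]
    ring
  · simp [mulAll, hD, dElt, Lmap, piA, outerIncl_tmul]
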